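/- Let f : ℝ^n → ℝ be convex differentiable, h : ℝ^m → ℝ proper l.s.c. convex, A an m × n real matrix, s ∈ ℝ^m, ν > 0. Define φ(x) = f(x) + min_y { h(y) + ⟨s, Ax - y⟩ + (ν/2)‖Ax - y‖₂² }. Then the inner minimum is attained, φ is differentiable, and ∇φ(x) = ∇f(x) + Aᵀ prox_{ν h*}(ν A x + s), where h* is the convex conjugate of h and prox denotes the proximal map. -/

import Mathlib

open RealInnerProductSpace

/-- Reinterpret a plain vector as an element of Euclidean space. -/
noncomputable def toE {m : ℕ} (v : Fin m → ℝ) : EuclideanSpace ℝ (Fin m) := WithLp.toLp 2 v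

/-- Convex conjugate of a real-valued function, as an `EReal`-valued function. -/
noncomputable def fenchelConj {m : ℕ} (h : EuclideanSpace ℝ (Fin m) → ℝ)
    (y : EuclideanSpace ℝ (Fin m)) : EReal :=
  ⨆ x : EuclideanSpace ℝ (Fin m), ((⟪x, y⟫ - h x : ℝ) : EReal)

/-- Inner objective `y ↦ h(y) + ⟨s, Ax - y⟩ + (ν/2)‖Ax - y‖²`. -/
noncomputable def innerObj {n m : ℕ} (h : EuclideanSpace ℝ (Fin m) → ℝ)
    (A : Matrix (Fin m) (Fin n) ℝ) (s : EuclideanSpace ℝ (Fin m)) (nu : ℝ)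
    (x : EuclideanSpace ℝ (Fin n)) (y : EuclideanSpace ℝ (Fin m)) : ℝ :=
  h y + ⟪s, toE (A.mulVec x) - y⟫ + (nu / 2) * ‖toE (A.mulVec x) - y‖ ^ 2

/-- `φ(x) = f(x) + min_y { h(y) + ⟨s, Ax - y⟩ + (ν/2)‖Ax - y‖² }`. -/
noncomputable def phiFun {n m : ℕ} (f : EuclideanSpace ℝ (Fin n) → ℝ)
    (h : EuclideanSpace ℝ (Fin m) → ℝ) (A : Matrix (Fin m) (Fin n) ℝ)
    (s : EuclideanSpace ℝ (Fin m)) (nu : ℝ) (x : EuclideanSpace ℝ (Fin n)) : ℝ :=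
  f x + sInf (Set.range (innerObj h A s nu x))

namespace Stmt15Aux

variable {m : ℕ}

abbrev F (m : ℕ) := EuclideanSpace ℝ (Fin m)

/-- the inner objective with the matrix-vector product abstracted as `c`. -/
noncomputable def obj (h : F m → ℝ) (s : F m) (nu : ℝ) (c y : F m) : ℝ :=
  h y + ⟪s, c - y⟫ + (nu / 2) * ‖c - y‖ ^ 2

/-- the envelope function. -/
noncomputable def env (h : F m → ℝ) (s : F m) (nu : ℝ) (c : F m) : ℝ :=
  sInf (Set.range (obj h s nu c))

section lemmas

variable {h : F m → ℝ} {s : F m} {nu : ℝ} (hnu : 0 < nu)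
  (hhconv : ConvexOn ℝ Set.univ h)

theorem hcont (hhconv : ConvexOn ℝ Set.univ h) : Continuous h := by
  rw [← continuousOn_univ]
  exact hhconv.continuousOn isOpen_univ

/-- affine lower bound on a finite convex function -/
theorem lower_bound (hhconv : ConvexOn ℝ Set.univ h) :
    ∃ K : ℝ, 0 ≤ K ∧ ∀ y : F m, -(K * (1 + ‖y‖)) ≤ h y := by
  obtain ⟨y0, -, hy0⟩ := (isCompact_closedBall (0 : F m) 1).exists_isMinOn
    (Metric.nonempty_closedBall.2 zero_le_one)
    ((hcont hhconv).continuousOn)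
  set B := h y0 with hB
  refine ⟨|B| + |h 0|, by positivity, fun y => ?_⟩
  have hball : ∀ z : F m, ‖z‖ ≤ 1 → B ≤ h z := fun z hz =>
    hy0 (by simpa [Metric.mem_closedBall, dist_eq_norm] using hz)
  rcases le_or_gt ‖y‖ 1 with hy | hy
  · have := hball y hy
    have : -(|B|) ≤ h y := le_trans (neg_abs_le B) this
    nlinarith [norm_nonneg y, abs_nonneg (h 0), abs_nonneg B,
      mul_nonneg (by positivity : (0:ℝ) ≤ |B| + |h 0|) (norm_nonneg y)]
  · set r := ‖y‖ with hr
    have hr1 : 1 < r := hy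
    have hrpos : 0 < r := by linarith
    set u : F m := r⁻¹ • y with hu
    have hunorm : ‖u‖ ≤ 1 := by
      rw [hu, norm_smul, norm_inv, norm_norm]
      rw [inv_mul_cancel₀ (by positivity)]
    have ha : (0:ℝ) ≤ r⁻¹ := by positivity
    have hb : (0:ℝ) ≤ 1 - r⁻¹ := by
      have : r⁻¹ ≤ 1 := by
        rw [inv_le_one_iff₀]; right; linarith
      linarith
    have hab : r⁻¹ + (1 - r⁻¹) = 1 := by ring
    have hcvx := hhconv.2 (Set.mem_univ y) (Set.mem_univ (0 : F m)) ha hb hab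
    rw [smul_zero, add_zero] at hcvx
    have hBu : B ≤ h u := hball u hunorm
    rw [hu] at hBu
    have h1 : B ≤ r⁻¹ * h y + (1 - r⁻¹) * h 0 := le_trans hBu hcvx
    have h2 : r * B ≤ h y + (r - 1) * h 0 := by
      have := mul_le_mul_of_nonneg_left h1 hrpos.le
      field_simp at this
      nlinarith [this]
    nlinarith [h2, mul_le_mul_of_nonneg_left (neg_abs_le B) hrpos.le,
      mul_le_mul_of_nonneg_left (le_abs_self (h 0)) (by linarith : (0:ℝ) ≤ r - 1),
      abs_nonneg (h 0), abs_nonneg B]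

theorem exists_min (hhconv : ConvexOn ℝ Set.univ h) (hnu : 0 < nu) (c : F m) :
    ∃ y : F m, ∀ y' : F m, obj h s nu c y ≤ obj h s nu c y' := by
  obtain ⟨K, hK0, hK⟩ := lower_bound hhconv
  have hcontobj : Continuous (obj h s nu c) := by
    unfold obj
    exact ((hcont hhconv).add
      (continuous_const.inner (continuous_const.sub continuous_id))).add (by fun_prop)
  apply hcontobj.exists_forall_le
  have hψ : Filter.Tendsto
      (fun r : ℝ => (nu/2) * (r - ‖c‖)^2 - (K + ‖s‖) * r - (K + ‖s‖ * ‖c‖))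
      Filter.atTop Filter.atTop := by
    have : ∀ r : ℝ, (nu/2) * (r - ‖c‖)^2 - (K + ‖s‖) * r - (K + ‖s‖ * ‖c‖)
        = r * ((nu/2) * r - (nu * ‖c‖ + K + ‖s‖)) + ((nu/2) * ‖c‖^2 - (K + ‖s‖ * ‖c‖)) := by
      intro r; ring
    simp only [this]
    apply Filter.tendsto_atTop_add_const_right
    apply Filter.Tendsto.atTop_mul_atTop₀ Filter.tendsto_id
    apply Filter.tendsto_atTop_add_const_right
    exact Filter.Tendsto.const_mul_atTop (by positivity) Filter.tendsto_id
  have hcomp := hψ.comp (tendsto_norm_cocompact_atTop (E := F m))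
  apply Filter.tendsto_atTop_mono _ hcomp
  intro y
  simp only [Function.comp_apply]
  have h1 := hK y
  have h2 : -(‖s‖ * ‖c - y‖) ≤ ⟪s, c - y⟫ := by
    have := abs_real_inner_le_norm s (c - y)
    rw [abs_le] at this
    linarith [this.1]
  have h3 : (‖y‖ - ‖c‖)^2 ≤ ‖c - y‖^2 := by
    have ha : |‖y‖ - ‖c‖| ≤ ‖c - y‖ := by
      rw [abs_sub_comm]
      exact abs_norm_sub_norm_le c y
    calc (‖y‖ - ‖c‖)^2 = |‖y‖ - ‖c‖|^2 := by rw [sq_abs]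
    _ ≤ ‖c - y‖^2 := by apply pow_le_pow_left₀ (abs_nonneg _) ha
  have h4 : ‖c - y‖ ≤ ‖c‖ + ‖y‖ := norm_sub_le c y
  have h5 : 0 ≤ ‖s‖ := norm_nonneg s
  unfold obj
  nlinarith [norm_nonneg (c - y), norm_nonneg y]

theorem subgrad (hhconv : ConvexOn ℝ Set.univ h) (hnu : 0 < nu) {c y1 : F m}
    (hy1 : ∀ y, obj h s nu c y1 ≤ obj h s nu c y) (y : F m) :
    h y1 + (⟪s, y - y1⟫ + nu * ⟪c - y1, y - y1⟫) ≤ h y := by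
  set D := y - y1 with hD
  have key : ∀ t : ℝ, 0 < t → t ≤ 1 →
      h y1 + (⟪s, D⟫ + nu * ⟪c - y1, D⟫) ≤ h y + nu / 2 * t * ‖D‖ ^ 2 := by
    intro t ht0 ht1
    have hmin := hy1 (y1 + t • D)
    have ha : (0:ℝ) ≤ 1 - t := by linarith
    have hconv := hhconv.2 (Set.mem_univ y1) (Set.mem_univ y) ha ht0.le
      (by ring : (1 - t) + t = 1)
    have heq : (1 - t) • y1 + t • y = y1 + t • D := by rw [hD]; module
    rw [heq, smul_eq_mul, smul_eq_mul] at hconv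
    have e1 : c - (y1 + t • D) = (c - y1) - t • D := by module
    have e2 : ⟪s, (c - y1) - t • D⟫ = ⟪s, c - y1⟫ - t * ⟪s, D⟫ := by
      rw [inner_sub_right, real_inner_smul_right]
    have e3 : ‖(c - y1) - t • D‖ ^ 2
        = ‖c - y1‖ ^ 2 - 2 * (t * ⟪c - y1, D⟫) + t ^ 2 * ‖D‖ ^ 2 := by
      rw [norm_sub_sq_real, real_inner_smul_right, norm_smul]
      rw [mul_pow, Real.norm_eq_abs, sq_abs]
    unfold obj at hmin
    rw [e1, e2, e3] at hmin
    have h0 : t * (h y1 + (⟪s, D⟫ + nu * ⟪c - y1, D⟫))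
        ≤ t * (h y + nu / 2 * t * ‖D‖ ^ 2) := by nlinarith [hmin, hconv]
    exact le_of_mul_le_mul_left h0 ht0
  apply le_of_forall_pos_le_add
  intro ε hε
  have hC : (0:ℝ) ≤ nu / 2 * ‖D‖ ^ 2 := by positivity
  set C := nu / 2 * ‖D‖ ^ 2 with hCdef
  have ht0 : 0 < min 1 (ε / (C + 1)) := lt_min one_pos (by positivity)
  have ht1 : min 1 (ε / (C + 1)) ≤ 1 := min_le_left _ _
  have h2 := key _ ht0 ht1
  have h3 : nu / 2 * min 1 (ε / (C + 1)) * ‖D‖ ^ 2 ≤ ε := by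
    have h4 : min 1 (ε / (C + 1)) ≤ ε / (C + 1) := min_le_right _ _
    have h5 : C * min 1 (ε / (C + 1)) ≤ C * (ε / (C + 1)) :=
      mul_le_mul_of_nonneg_left h4 hC
    have h6 : C * (ε / (C + 1)) ≤ ε := by
      rw [mul_div_assoc']
      rw [div_le_iff₀ (by positivity)]
      nlinarith
    calc nu / 2 * min 1 (ε / (C + 1)) * ‖D‖ ^ 2
        = C * min 1 (ε / (C + 1)) := by rw [hCdef]; ring
      _ ≤ ε := le_trans h5 h6
  linarith

theorem strongmin (hhconv : ConvexOn ℝ Set.univ h) (hnu : 0 < nu) {c y1 : F m}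
    (hy1 : ∀ y, obj h s nu c y1 ≤ obj h s nu c y) (y : F m) :
    obj h s nu c y1 + nu / 2 * ‖y - y1‖ ^ 2 ≤ obj h s nu c y := by
  have hsg := subgrad hhconv hnu hy1 y
  have e1 : c - y = (c - y1) - (y - y1) := by module
  have e2 : ⟪s, (c - y1) - (y - y1)⟫ = ⟪s, c - y1⟫ - ⟪s, y - y1⟫ := inner_sub_right s _ _
  have e3 : ‖(c - y1) - (y - y1)‖ ^ 2
      = ‖c - y1‖ ^ 2 - 2 * ⟪c - y1, y - y1⟫ + ‖y - y1‖ ^ 2 := norm_sub_sq_real _ _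
  unfold obj
  rw [e1, e2, e3]
  nlinarith [hsg]

theorem nonexp (hhconv : ConvexOn ℝ Set.univ h) (hnu : 0 < nu) {c1 c2 y1 y2 : F m}
    (hy1 : ∀ y, obj h s nu c1 y1 ≤ obj h s nu c1 y)
    (hy2 : ∀ y, obj h s nu c2 y2 ≤ obj h s nu c2 y) :
    ‖y1 - y2‖ ≤ ‖c1 - c2‖ := by
  have h1 := strongmin hhconv hnu hy1 y2
  have h2 := strongmin hhconv hnu hy2 y1
  have key : ‖y1 - y2‖ ^ 2 ≤ ⟪c1 - c2, y1 - y2⟫ := by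
    have e1 : ∀ y : F m, ‖c1 - y‖ ^ 2 - ‖c2 - y‖ ^ 2
        = ‖c1‖ ^ 2 - ‖c2‖ ^ 2 - 2 * ⟪c1 - c2, y⟫ := by
      intro y
      rw [norm_sub_sq_real, norm_sub_sq_real, inner_sub_left]
      ring
    have e2 : ∀ y : F m, ⟪s, c1 - y⟫ - ⟪s, c2 - y⟫ = ⟪s, c1⟫ - ⟪s, c2⟫ := by
      intro y
      rw [inner_sub_right, inner_sub_right]
      ring
    have e3 : ⟪c1 - c2, y1⟫ - ⟪c1 - c2, y2⟫ = ⟪c1 - c2, y1 - y2⟫ :=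
      (inner_sub_right _ _ _).symm
    have hsum : nu * ‖y1 - y2‖ ^ 2 ≤ nu * ⟪c1 - c2, y1 - y2⟫ := by
      unfold obj at h1 h2
      have a1 := e1 y1
      have a2 := e1 y2
      have b1 := e2 y1
      have b2 := e2 y2
      have hny : ‖y2 - y1‖ ^ 2 = ‖y1 - y2‖ ^ 2 := by rw [norm_sub_rev]
      nlinarith [h1, h2]
    exact le_of_mul_le_mul_left hsum hnu
  rcases eq_or_ne y1 y2 with rfl | hne
  · simp
  · have hpos : 0 < ‖y1 - y2‖ := by
      rw [norm_pos_iff, sub_ne_zero]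
      exact hne
    have := le_trans key (real_inner_le_norm (c1 - c2) (y1 - y2))
    rw [pow_two] at this
    exact le_of_mul_le_mul_right (by linarith [this]) hpos

theorem bdd (hhconv : ConvexOn ℝ Set.univ h) (hnu : 0 < nu) (c : F m) :
    BddBelow (Set.range (obj h s nu c)) := by
  obtain ⟨y1, hy1⟩ := exists_min (s := s) hhconv hnu c
  exact ⟨obj h s nu c y1, by rintro _ ⟨y, rfl⟩; exact hy1 y⟩

theorem env_le (hhconv : ConvexOn ℝ Set.univ h) (hnu : 0 < nu) (c y : F m) :
    env h s nu c ≤ obj h s nu c y :=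
  csInf_le (bdd hhconv hnu c) (Set.mem_range_self y)

theorem env_eq (hhconv : ConvexOn ℝ Set.univ h) (hnu : 0 < nu) {c y1 : F m}
    (hy1 : ∀ y, obj h s nu c y1 ≤ obj h s nu c y) :
    env h s nu c = obj h s nu c y1 :=
  IsLeast.csInf_eq ⟨Set.mem_range_self y1, by rintro _ ⟨y, rfl⟩; exact hy1 y⟩

theorem env_upper (hhconv : ConvexOn ℝ Set.univ h) (hnu : 0 < nu) {c y1 : F m}
    (hy1 : ∀ y, obj h s nu c y1 ≤ obj h s nu c y) (c' : F m) :
    env h s nu c' ≤ env h s nu c + ⟪s + nu • (c - y1), c' - c⟫ + nu / 2 * ‖c' - c‖ ^ 2 := by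
  have h1 : env h s nu c' ≤ obj h s nu c' y1 := env_le hhconv hnu c' y1
  rw [env_eq hhconv hnu hy1]
  have e0 : c' - y1 = (c - y1) + (c' - c) := by module
  have e1 : ⟪s, (c - y1) + (c' - c)⟫ = ⟪s, c - y1⟫ + ⟪s, c' - c⟫ := inner_add_right s _ _
  have e2 : ‖(c - y1) + (c' - c)‖ ^ 2
      = ‖c - y1‖ ^ 2 + 2 * ⟪c - y1, c' - c⟫ + ‖c' - c‖ ^ 2 := norm_add_sq_real _ _
  have e3 : ⟪s + nu • (c - y1), c' - c⟫ = ⟪s, c' - c⟫ + nu * ⟪c - y1, c' - c⟫ := by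
    rw [inner_add_left, real_inner_smul_left]
  unfold obj at h1 ⊢
  rw [e0, e1, e2] at h1
  rw [e3]
  nlinarith [h1]

/-- The abs bound for the envelope increment. -/
theorem env_bound (hhconv : ConvexOn ℝ Set.univ h) (hnu : 0 < nu) {c c' y1 y1' : F m}
    (hy1 : ∀ y, obj h s nu c y1 ≤ obj h s nu c y)
    (hy1' : ∀ y, obj h s nu c' y1' ≤ obj h s nu c' y) :
    |env h s nu c' - env h s nu c - ⟪s + nu • (c - y1), c' - c⟫|
      ≤ (5 * nu / 2) * ‖c' - c‖ ^ 2 := by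
  have E1 := env_upper hhconv hnu hy1 c'
  have E2 := env_upper hhconv hnu hy1' c
  set Q := s + nu • (c - y1) with hQ
  set Q' := s + nu • (c' - y1') with hQ'
  have hqd : Q' - Q = nu • ((c' - c) - (y1' - y1)) := by rw [hQ, hQ']; module
  have hqn : ‖Q' - Q‖ ≤ 2 * nu * ‖c' - c‖ := by
    rw [hqd, norm_smul, Real.norm_eq_abs, abs_of_pos hnu]
    have h1 : ‖(c' - c) - (y1' - y1)‖ ≤ ‖c' - c‖ + ‖y1' - y1‖ := norm_sub_le _ _
    have h2 : ‖y1' - y1‖ ≤ ‖c' - c‖ := nonexp hhconv hnu hy1' hy1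
    nlinarith [norm_nonneg ((c' - c) - (y1' - y1))]
  have hinner1 : ⟪Q', c - c'⟫ = -⟪Q', c' - c⟫ := by
    rw [show c - c' = -(c' - c) by module, inner_neg_right]
  have hinner2 : ⟪Q', c' - c⟫ - ⟪Q, c' - c⟫ = ⟪Q' - Q, c' - c⟫ := (inner_sub_left _ _ _).symm
  have hcs : -(‖Q' - Q‖ * ‖c' - c‖) ≤ ⟪Q' - Q, c' - c⟫ := by
    have := abs_real_inner_le_norm (Q' - Q) (c' - c)
    rw [abs_le] at this
    linarith [this.1]
  have hns : ‖c - c'‖ = ‖c' - c‖ := norm_sub_rev _ _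
  rw [abs_le]
  constructor
  · rw [hns] at E2
    have : -(‖Q' - Q‖ * ‖c' - c‖) ≤ ⟪Q', c' - c⟫ - ⟪Q, c' - c⟫ := by
      rw [hinner2]; exact hcs
    nlinarith [mul_le_mul_of_nonneg_right hqn (norm_nonneg (c' - c)), E2,
      sq_nonneg ‖c' - c‖]
  · nlinarith [E1, sq_nonneg ‖c' - c‖]

/-- A global choice of minimizer. -/
noncomputable def ys (h : F m → ℝ) (s : F m) (nu : ℝ) (hhconv : ConvexOn ℝ Set.univ h)
    (hnu : 0 < nu) (c : F m) : F m :=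
  Classical.choose (exists_min (s := s) hhconv hnu c)

theorem ys_spec (hhconv : ConvexOn ℝ Set.univ h) (hnu : 0 < nu) (c : F m) :
    ∀ y, obj h s nu c (ys h s nu hhconv hnu c) ≤ obj h s nu c y :=
  Classical.choose_spec (exists_min (s := s) hhconv hnu c)

theorem hasGradient_env (hhconv : ConvexOn ℝ Set.univ h) (hnu : 0 < nu) (c : F m) :
    HasGradientAt (env h s nu) (s + nu • (c - ys h s nu hhconv hnu c)) c := by
  rw [hasGradientAt_iff_hasFDerivAt]
  rw [hasFDerivAt_iff_isLittleO]
  rw [Asymptotics.isLittleO_iff]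
  intro ε hε
  have hδ : (0:ℝ) < ε / (5 * nu / 2 + 1) := by positivity
  filter_upwards [Metric.ball_mem_nhds c hδ] with c' hc'
  rw [Metric.mem_ball, dist_eq_norm] at hc'
  have hb := env_bound hhconv hnu (ys_spec hhconv hnu c) (ys_spec hhconv hnu c') (s := s)
  rw [InnerProductSpace.toDual_apply_apply]
  rw [Real.norm_eq_abs]
  have h2 : (5 * nu / 2) * ‖c' - c‖ ^ 2 ≤ ε * ‖c' - c‖ := by
    have h3 : (5 * nu / 2) * ‖c' - c‖ ≤ ε := by
      have h4 : (5 * nu / 2) * ‖c' - c‖ ≤ (5 * nu / 2) * (ε / (5 * nu / 2 + 1)) := by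
        apply mul_le_mul_of_nonneg_left hc'.le (by positivity)
      have h5 : (5 * nu / 2) * (ε / (5 * nu / 2 + 1)) ≤ ε := by
        rw [mul_div_assoc', div_le_iff₀ (by positivity)]
        nlinarith
      linarith
    calc (5 * nu / 2) * ‖c' - c‖ ^ 2 = ((5 * nu / 2) * ‖c' - c‖) * ‖c' - c‖ := by ring
      _ ≤ ε * ‖c' - c‖ := mul_le_mul_of_nonneg_right h3 (norm_nonneg _)
  calc |env h s nu c' - env h s nu c - ⟪s + nu • (c - ys h s nu hhconv hnu c), c' - c⟫|
      ≤ (5 * nu / 2) * ‖c' - c‖ ^ 2 := hb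
    _ ≤ ε * ‖c' - c‖ := h2

end lemmas

/-- The matrix as a continuous linear map between Euclidean spaces. -/
noncomputable def matL {n m : ℕ} (A : Matrix (Fin m) (Fin n) ℝ) :
    EuclideanSpace ℝ (Fin n) →L[ℝ] EuclideanSpace ℝ (Fin m) :=
  LinearMap.toContinuousLinearMap (Matrix.toEuclideanLin A)

theorem matL_apply {n m : ℕ} (A : Matrix (Fin m) (Fin n) ℝ) (x : EuclideanSpace ℝ (Fin n)) :
    matL A x = (WithLp.equiv 2 (Fin m → ℝ)).symm (A.mulVec x) := by
  rw [matL, LinearMap.coe_toContinuousLinearMap', Matrix.toEuclideanLin_apply]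
  rfl

end Stmt15Aux

open Stmt15Aux

theorem stmt_15 {n m : ℕ} (f : EuclideanSpace ℝ (Fin n) → ℝ)
    (h : EuclideanSpace ℝ (Fin m) → ℝ) (A : Matrix (Fin m) (Fin n) ℝ)
    (s : EuclideanSpace ℝ (Fin m)) (nu : ℝ) (hnu : 0 < nu)
    (hfconv : ConvexOn ℝ Set.univ f) (hfdiff : Differentiable ℝ f)
    (hhconv : ConvexOn ℝ Set.univ h) (hhlsc : LowerSemicontinuous h) :
    (∀ x : EuclideanSpace ℝ (Fin n), ∃ y : EuclideanSpace ℝ (Fin m),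
      IsLeast (Set.range (innerObj h A s nu x)) (innerObj h A s nu x y)) ∧
    Differentiable ℝ (phiFun f h A s nu) ∧
    (∀ (x : EuclideanSpace ℝ (Fin n)) (pstar : EuclideanSpace ℝ (Fin m)),
      (∀ u : EuclideanSpace ℝ (Fin m),
        (nu : EReal) * fenchelConj h pstar
            + (((1 / 2) * ‖(nu • toE (A.mulVec x) + s) - pstar‖ ^ 2 : ℝ) : EReal)
          ≤ (nu : EReal) * fenchelConj h u
            + (((1 / 2) * ‖(nu • toE (A.mulVec x) + s) - u‖ ^ 2 : ℝ) : EReal)) →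
      gradient (phiFun f h A s nu) x
        = gradient f x + toE (A.transpose.mulVec fun i => pstar i)) := by
  -- basic identifications
  have hobj : ∀ x : EuclideanSpace ℝ (Fin n),
      innerObj h A s nu x = Stmt15Aux.obj h s nu (toE (A.mulVec x)) := fun x => rfl
  have hLx : ∀ x : EuclideanSpace ℝ (Fin n), matL A x = toE (A.mulVec x) := by
    intro x
    rw [matL_apply]
    rfl
  have hphi : phiFun f h A s nu = fun x => f x + env h s nu (matL A x) := by
    funext x
    rw [phiFun, hobj, hLx]
    rfl
  -- the gradient of phi at each point
  set YS : EuclideanSpace ℝ (Fin m) → EuclideanSpace ℝ (Fin m) :=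
    Stmt15Aux.ys h s nu hhconv hnu with hYS
  have adj_lemma : ∀ (q : EuclideanSpace ℝ (Fin m)) (v : EuclideanSpace ℝ (Fin n)),
      ⟪q, toE (A.mulVec v)⟫ = ⟪toE (A.transpose.mulVec q), v⟫ := by
    intro q v
    simp only [PiLp.inner_apply, RCLike.inner_apply, starRingEnd_apply, star_trivial]
    show dotProduct (A.mulVec v) q = dotProduct v (A.transpose.mulVec q)
    rw [dotProduct_comm, Matrix.dotProduct_mulVec, Matrix.mulVec_transpose, dotProduct_comm]
  have hgrad : ∀ x : EuclideanSpace ℝ (Fin n),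
      HasGradientAt (phiFun f h A s nu)
        (gradient f x + toE (A.transpose.mulVec
          (s + nu • (matL A x - YS (matL A x))))) x := by
    intro x
    set q : EuclideanSpace ℝ (Fin m) := s + nu • (matL A x - YS (matL A x)) with hq
    have hEf : HasFDerivAt f (InnerProductSpace.toDual ℝ _ (gradient f x)) x :=
      hasGradientAt_iff_hasFDerivAt.1 (hfdiff x).hasGradientAt
    have hEenv : HasFDerivAt (env h s nu) (InnerProductSpace.toDual ℝ _ q) (matL A x) :=
      hasGradientAt_iff_hasFDerivAt.1 (hasGradient_env hhconv hnu (matL A x))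
    have hcomp := hEenv.comp x ((matL A).hasFDerivAt)
    have hsum := hEf.add hcomp
    have heqCLM : InnerProductSpace.toDual ℝ _ (gradient f x)
          + (InnerProductSpace.toDual ℝ _ q).comp (matL A)
        = InnerProductSpace.toDual ℝ _ (gradient f x + toE (A.transpose.mulVec q)) := by
      ext v
      simp only [ContinuousLinearMap.add_apply, ContinuousLinearMap.coe_comp',
        Function.comp_apply, InnerProductSpace.toDual_apply_apply, inner_add_left]
      rw [hLx v, adj_lemma q v]
    rw [hasGradientAt_iff_hasFDerivAt, hphi]
    have hfin : HasFDerivAt (fun x => f x + env h s nu (matL A x))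
        (InnerProductSpace.toDual ℝ _ (gradient f x + toE (A.transpose.mulVec q))) x := by
      rw [← heqCLM]
      exact hsum
    exact hfin
  refine ⟨?_, ?_, ?_⟩
  · -- part 1: existence of minimizer
    intro x
    obtain ⟨y, hy⟩ := exists_min (s := s) hhconv hnu (toE (A.mulVec x))
    refine ⟨y, Set.mem_range_self y, ?_⟩
    rintro _ ⟨y', rfl⟩
    rw [hobj]
    exact hy y'
  · -- part 2: differentiability
    intro x
    exact (hgrad x).differentiableAt
  · -- part 3: the gradient formula
    intro x pstar hyp
    set c : EuclideanSpace ℝ (Fin m) := toE (A.mulVec x) with hc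
    have hcL : matL A x = c := hLx x
    set ysc : EuclideanSpace ℝ (Fin m) := YS c with hysc
    set q : EuclideanSpace ℝ (Fin m) := s + nu • (c - ysc) with hq
    set z : EuclideanSpace ℝ (Fin m) := nu • c + s with hz
    have hzq : z - q = nu • ysc := by rw [hz, hq]; module
    -- the subgradient inequality
    have hsg : ∀ y, ⟪y, q⟫ - h y ≤ ⟪ysc, q⟫ - h ysc := by
      intro y
      have := subgrad (s := s) hhconv hnu (ys_spec hhconv hnu c) y
      have e1 : ⟪q, y - ysc⟫ = ⟪s, y - ysc⟫ + nu * ⟪c - ysc, y - ysc⟫ := by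
        rw [hq, inner_add_left, real_inner_smul_left]
      have e2 : ⟪q, y - ysc⟫ = ⟪q, y⟫ - ⟪q, ysc⟫ := inner_sub_right q y ysc
      have e3 : ⟪q, y⟫ = ⟪y, q⟫ := real_inner_comm y q
      have e4 : ⟪q, ysc⟫ = ⟪ysc, q⟫ := real_inner_comm ysc q
      linarith [this, e1, e2, e3, e4]
    set rq : ℝ := ⟪ysc, q⟫ - h ysc with hrq
    have hfcq : fenchelConj h q = (rq : EReal) := by
      apply le_antisymm
      · apply iSup_le
        intro y
        exact_mod_cast hsg y
      · exact le_iSup (fun y => ((⟪y, q⟫ - h y : ℝ) : EReal)) ysc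
    -- fenchelConj h pstar is finite
    have hfc_le : ∀ (u y : EuclideanSpace ℝ (Fin m)),
        ((⟪y, u⟫ - h y : ℝ) : EReal) ≤ fenchelConj h u := fun u y =>
      le_iSup (fun y => ((⟪y, u⟫ - h y : ℝ) : EReal)) y
    have hne_bot : fenchelConj h pstar ≠ ⊥ := by
      intro hb
      have := hfc_le pstar 0
      rw [hb] at this
      simp at this
    have hyp_q := hyp q
    rw [hfcq] at hyp_q
    have hRHS : (nu : EReal) * (rq : EReal)
        + (((1 / 2) * ‖(nu • toE (A.mulVec x) + s) - q‖ ^ 2 : ℝ) : EReal)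
        = ((nu * rq + (1 / 2) * ‖z - q‖ ^ 2 : ℝ) : EReal) := by
      rw [← EReal.coe_mul, ← EReal.coe_add]
    rw [hRHS] at hyp_q
    have hne_top : fenchelConj h pstar ≠ ⊤ := by
      intro ht
      rw [ht] at hyp_q
      rw [EReal.coe_mul_top_of_pos hnu] at hyp_q
      rw [EReal.top_add_coe] at hyp_q
      exact (EReal.coe_lt_top _).not_ge hyp_q
    set r : ℝ := (fenchelConj h pstar).toReal with hrdef
    have hr : (r : EReal) = fenchelConj h pstar := EReal.coe_toReal hne_top hne_bot
    rw [← hr, ← EReal.coe_mul, ← EReal.coe_add] at hyp_q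
    have hyp_real : nu * r + (1 / 2) * ‖z - pstar‖ ^ 2
        ≤ nu * rq + (1 / 2) * ‖z - q‖ ^ 2 := by exact_mod_cast hyp_q
    have hrlow : ⟪ysc, pstar⟫ - h ysc ≤ r := by
      have := hfc_le pstar ysc
      rw [← hr] at this
      exact_mod_cast this
    -- expand the norm
    have hnorm : ‖z - pstar‖ ^ 2
        = ‖z - q‖ ^ 2 - 2 * (nu * (⟪ysc, pstar⟫ - ⟪ysc, q⟫)) + ‖pstar - q‖ ^ 2 := by
      have e0 : z - pstar = (z - q) - (pstar - q) := by module
      rw [e0, norm_sub_sq_real, hzq, real_inner_smul_left, inner_sub_right]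
    have hkey : ‖pstar - q‖ ^ 2 ≤ 0 := by
      have hmul := mul_le_mul_of_nonneg_left hrlow hnu.le
      rw [hrq] at hyp_real
      nlinarith [hyp_real, hnorm, hmul]
    have hpq : pstar = q := by
      have h0 : ‖pstar - q‖ = 0 := by
        have h1 : ‖pstar - q‖ ^ 2 = 0 := le_antisymm hkey (sq_nonneg _)
        exact pow_eq_zero_iff two_ne_zero |>.mp h1
      rwa [norm_sub_eq_zero_iff] at h0
    have := (hgrad x).gradient
    rw [this, hcL]
    have : (fun i => pstar i) = (pstar : Fin m → ℝ) := rfl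
    rw [this, hpq]
    rfl
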